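/- arXiv:2602.11449 — 2 statements merged into one kernel-verified Lean document; each statement's English description precedes it below -/
import Mathlib

section
/- Let φ be a real symmetric positive definite p×p matrix. Suppose the real p×p matrices U_0, U_1, …, U_{m+1} satisfy the block Neumann condition γ_0⁻¹(U_1 − U_0) = −I_p, the block Stieltjes string equations γ_{i−1}⁻¹(U_i − U_{i−1}) − γ_i⁻¹(U_{i+1} − U_i) + s·γ̂_i·U_i = 0 for i = 1, …, m, and the discrete Sommerfeld radiation condition √s·φ·U_{m+1} = −γ_m⁻¹·(U_{m+1} − U_m). Then U_1 = C_1(s; (√s·φ)⁻¹); that is, the Kreĭn–Nudelman quadrature F̂^φ_m(s) equals the matricial Stieltjes continued fraction terminated by (√s·φ)⁻¹ (equations (3.8) and (B.7)). -/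
open Matrix


/-- Tail values of the backward S-fraction recursion: `sfracTail m s γ γ̂ D k` is
`C_{m+1-k}`, where `C_{m+1} = D` and `C_i = (s·γ̂_i + (γ_i + C_{i+1})⁻¹)⁻¹`. -/
noncomputable def sfracTail {p : ℕ} (m : ℕ) (s : ℝ)
    (γ γhat : ℕ → Matrix (Fin p) (Fin p) ℝ) (D : Matrix (Fin p) (Fin p) ℝ) :
    ℕ → Matrix (Fin p) (Fin p) ℝ
  | 0 => D
  | k + 1 => (s • γhat (m - k) + (γ (m - k) + sfracTail m s γ γhat D k)⁻¹)⁻¹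

/-- The S-fraction value `C_i(s; D)`, `i = 1, …, m+1`, defined by the backward
recursion `C_{m+1} = D`, `C_i = (s·γ̂_i + (γ_i + C_{i+1})⁻¹)⁻¹`. -/
noncomputable def sfracC {p : ℕ} (m : ℕ) (s : ℝ)
    (γ γhat : ℕ → Matrix (Fin p) (Fin p) ℝ) (D : Matrix (Fin p) (Fin p) ℝ)
    (i : ℕ) : Matrix (Fin p) (Fin p) ℝ :=
  sfracTail m s γ γhat D (m + 1 - i)

/-- Positive scalar multiple of a positive definite real matrix is positive definite. -/
lemma posDef_smul_aux {n : Type*} [Fintype n] {M : Matrix n n ℝ} (hM : M.PosDef)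
    {c : ℝ} (hc : 0 < c) : (c • M).PosDef := by
  refine ⟨?_, fun x hx => ?_⟩
  · unfold Matrix.IsHermitian
    rw [conjTranspose_smul, hM.1]
    simp
  · convert mul_pos hc (hM.2 hx) using 1
    simp only [Finsupp.sum, Finset.mul_sum, Matrix.smul_apply, smul_eq_mul]
    exact Finset.sum_congr rfl fun i _ => Finset.sum_congr rfl fun j _ => by ring

/-- Left inverse cancellation for positive definite matrices. -/
lemma posDef_inv_mul_cancel {n : Type*} [Fintype n] [DecidableEq n]
    {M : Matrix n n ℝ} (hM : M.PosDef) : M⁻¹ * M = 1 :=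
  Matrix.nonsing_inv_mul M (isUnit_iff_isUnit_det M |>.1 hM.isUnit)

lemma posDef_mul_inv_cancel {n : Type*} [Fintype n] [DecidableEq n]
    {M : Matrix n n ℝ} (hM : M.PosDef) : M * M⁻¹ = 1 :=
  Matrix.mul_nonsing_inv M (isUnit_iff_isUnit_det M |>.1 hM.isUnit)

/-- **The Kreĭn–Nudelman quadrature equals the matricial Stieltjes continued
fraction terminated by `(√s·φ)⁻¹` (equations (3.8) and (B.7)).** If `U_0, …, U_{m+1}`
satisfy the block Neumann condition `γ_0⁻¹(U_1 − U_0) = −I_p`, the block Stieltjes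
string equations for `i = 1, …, m`, and the discrete Sommerfeld radiation
condition `√s·φ·U_{m+1} = −γ_m⁻¹(U_{m+1} − U_m)`, then `U_1 = C_1(s; (√s·φ)⁻¹)`. -/
theorem krein_nudelman_quadrature_eq_sfraction
    (p m : ℕ) (hp : 1 ≤ p) (hm : 1 ≤ m) (s : ℝ) (hs : 0 < s)
    (γ γhat : ℕ → Matrix (Fin p) (Fin p) ℝ)
    (hγ : ∀ i, i ≤ m → (γ i).PosDef)
    (hγhat : ∀ i, 1 ≤ i → i ≤ m → (γhat i).PosDef)
    (φ : Matrix (Fin p) (Fin p) ℝ) (hφ : φ.PosDef)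
    (U : ℕ → Matrix (Fin p) (Fin p) ℝ)
    (hneu : (γ 0)⁻¹ * (U 1 - U 0) = -(1 : Matrix (Fin p) (Fin p) ℝ))
    (hstring : ∀ i, 1 ≤ i → i ≤ m →
      (γ (i - 1))⁻¹ * (U i - U (i - 1)) - (γ i)⁻¹ * (U (i + 1) - U i)
        + s • (γhat i * U i) = 0)
    (hsommerfeld : Real.sqrt s • (φ * U (m + 1)) =
      -((γ m)⁻¹ * (U (m + 1) - U m))) :
    U 1 = sfracC m s γ γhat (Real.sqrt s • φ)⁻¹ 1 := by
  set D : Matrix (Fin p) (Fin p) ℝ := (Real.sqrt s • φ)⁻¹ with hDdef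
  set G : ℕ → Matrix (Fin p) (Fin p) ℝ := fun j => (γ j)⁻¹ * (U (j + 1) - U j) with hGdef
  have hsqrt : 0 < Real.sqrt s := Real.sqrt_pos.mpr hs
  have hφs : (Real.sqrt s • φ).PosDef := posDef_smul_aux hφ hsqrt
  have hD : D.PosDef := hφs.inv
  -- Main backward induction
  have key : ∀ k, k ≤ m →
      (sfracTail m s γ γhat D k).PosDef ∧
      U (m + 1 - k) = -(sfracTail m s γ γhat D k * G (m - k)) := by
    intro k
    induction k with
    | zero =>
      intro _
      refine ⟨hD, ?_⟩
      -- Sommerfeld: (√s • φ) * U (m+1) = -(G m)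
      have h1 : (Real.sqrt s • φ) * U (m + 1) = -(G m) := by
        rw [smul_mul_assoc]
        simpa [hGdef] using hsommerfeld
      have : D * ((Real.sqrt s • φ) * U (m + 1)) = D * (-(G m)) := by rw [h1]
      rw [← mul_assoc, posDef_inv_mul_cancel hφs, one_mul, mul_neg] at this
      simpa [sfracTail] using this
    | succ k ih =>
      intro hk1
      have hk : k ≤ m := le_of_lt (Nat.lt_of_succ_le hk1)
      obtain ⟨hCk, hUk⟩ := ih hk
      set Ck := sfracTail m s γ γhat D k with hCkdef
      set i := m - k with hidef
      have hi1 : 1 ≤ i := Nat.le_sub_of_add_le (by omega)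
      have hile : i ≤ m := Nat.sub_le m k
      have him1 : m + 1 - k = i + 1 := by omega
      have him2 : m + 1 - (k + 1) = i := by omega
      have him3 : m - (k + 1) = i - 1 := by omega
      have hii : i - 1 + 1 = i := Nat.sub_add_cancel hi1
      have hγi : (γ i).PosDef := hγ i hile
      have hγhi : (γhat i).PosDef := hγhat i hi1 hile
      -- U (i+1) = -(Ck * G i)
      rw [him1] at hUk
      -- string equation at i: G (i-1) - G i + s • (γhat i * U i) = 0
      have hstr := hstring i hi1 hile
      have hstr' : G i = G (i - 1) + s • (γhat i * U i) := by
        have : G (i - 1) - G i + s • (γhat i * U i) = 0 := by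
          simpa [hGdef, hii] using hstr
        have := congrArg (· + G i) this
        simp only [sub_add_cancel, zero_add] at this
        rw [← this]; abel
      -- γ i * G i = U (i+1) - U i
      have hγG : γ i * G i = U (i + 1) - U i := by
        rw [hGdef]
        simp only
        rw [← mul_assoc, posDef_mul_inv_cancel hγi, one_mul]
      -- U i = -((γ i + Ck) * G i)
      have hA : (γ i + Ck).PosDef := hγi.add hCk
      have hUi : U i = -((γ i + Ck) * G i) := by
        have : U i = U (i + 1) - γ i * G i := by rw [hγG]; abel
        rw [this, hUk, add_mul]
        abel
      -- (A⁻¹) * U i = -(G i)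
      have hAinvUi : (γ i + Ck)⁻¹ * U i = -(G i) := by
        rw [hUi, mul_neg, ← mul_assoc, posDef_inv_mul_cancel hA, one_mul]
      -- B * U i = -(G (i-1)) where B = s • γhat i + A⁻¹
      set B : Matrix (Fin p) (Fin p) ℝ := s • γhat i + (γ i + Ck)⁻¹ with hBdef
      have hB : B.PosDef := (posDef_smul_aux hγhi hs).add hA.inv
      have hBUi : B * U i = -(G (i - 1)) := by
        rw [hBdef, add_mul, hAinvUi, hstr', smul_mul_assoc]
        abel
      -- tail (k+1) = B⁻¹
      have htail : sfracTail m s γ γhat D (k + 1) = B⁻¹ := by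
        simp [sfracTail, hBdef, ← hCkdef, ← hidef]
      refine ⟨?_, ?_⟩
      · rw [htail]; exact hB.inv
      · rw [him2, htail, him3]
        have := congrArg (fun M => B⁻¹ * M) hBUi
        rw [← mul_assoc, posDef_inv_mul_cancel hB, one_mul, mul_neg] at this
        rw [this]
  -- conclude at k = m
  obtain ⟨_, hU1⟩ := key m le_rfl
  have hG0 : G (m - m) = -1 := by
    simp only [Nat.sub_self, hGdef]
    exact hneu
  rw [Nat.add_sub_cancel_left] at hU1
  rw [hU1, hG0, mul_neg, mul_one, neg_neg, sfracC]
  simp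
end

section
/- Let p ≥ 1, m ≥ 1, s > 0, and let γ_1, …, γ_{m+1} and γ̂_1, …, γ̂_{m+1} be real symmetric positive definite p×p matrices. For 1 ≤ k ≤ m+1 let G_k denote the Gauss value C_1 computed from the parameters (γ_i, γ̂_i)_{i ≤ k} with zero termination C_{k+1} = 0, and let R_k denote the Gauss–Radau value computed from the same parameters with the modified last step C̃_k = (s·γ̂_k)⁻¹ and C̃_i = (s·γ̂_i + (γ_i + C̃_{i+1})⁻¹)⁻¹ for i < k. Then G_{m+1} − G_m is positive definite and R_m − R_{m+1} is positive definite; that is, at every fixed s ∈ ℝ₊ the Gauss values increase strictly and the Gauss–Radau values decrease strictly in the Löwner order as the continued-fraction depth grows (the continued-fraction form of the interlacing bound (3.5)). -/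
open Matrix


variable {p : ℕ}

lemma posDef_smul {A : Matrix (Fin p) (Fin p) ℝ} (hA : A.PosDef) {s : ℝ} (hs : 0 < s) :
    (s • A).PosDef := by
  have hH : (s • A).IsHermitian := by
    show (s • A)ᴴ = s • A
    rw [conjTranspose_smul, star_trivial, hA.1.eq]
  refine PosDef.of_dotProduct_mulVec_pos hH fun x hx => ?_
  rw [smul_mulVec, dotProduct_smul]
  exact mul_pos hs (hA.dotProduct_mulVec_pos hx)

lemma posDef_conj {A B : Matrix (Fin p) (Fin p) ℝ} (hA : A.PosDef) (hB : IsUnit B) :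
    (Bᴴ * A * B).PosDef := by
  refine PosDef.of_dotProduct_mulVec_pos (isHermitian_conjTranspose_mul_mul B hA.1) fun x hx => ?_
  have hBx : B *ᵥ x ≠ 0 := by
    intro h
    exact hx (mulVec_injective_iff_isUnit.2 hB (by simpa using h))
  simpa only [star_mulVec, dotProduct_mulVec, vecMul_vecMul] using hA.dotProduct_mulVec_pos hBx

lemma inv_sub_inv_posDef {A E : Matrix (Fin p) (Fin p) ℝ}
    (hA : A.PosDef) (hE : E.PosDef) : (A⁻¹ - (A + E)⁻¹).PosDef := by
  have hAd : IsUnit A.det := isUnit_iff_isUnit_det A |>.mp hA.isUnit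
  have hEd : IsUnit E.det := isUnit_iff_isUnit_det E |>.mp hE.isUnit
  have hAE : (A + E).PosDef := hA.add hE
  have hAEd : IsUnit (A + E).det := isUnit_iff_isUnit_det _ |>.mp hAE.isUnit
  have h1 : E⁻¹ + A⁻¹ = E⁻¹ * (A + E) * A⁻¹ := by
    rw [mul_add, add_mul, mul_assoc, Matrix.mul_nonsing_inv _ hAd, Matrix.mul_one,
      Matrix.nonsing_inv_mul _ hEd, Matrix.one_mul]
  have h2 : (E⁻¹ + A⁻¹)⁻¹ = A * (A + E)⁻¹ * E := by
    rw [h1, Matrix.mul_inv_rev, Matrix.mul_inv_rev,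
      Matrix.nonsing_inv_nonsing_inv _ hAd, Matrix.nonsing_inv_nonsing_inv _ hEd, mul_assoc]
  have h3 : (A⁻¹)ᴴ * (E⁻¹ + A⁻¹)⁻¹ * A⁻¹ = A⁻¹ - (A + E)⁻¹ := by
    rw [hA.inv.isHermitian.eq, h2]
    calc A⁻¹ * (A * (A + E)⁻¹ * E) * A⁻¹
        = (A⁻¹ * A) * ((A + E)⁻¹ * (E * A⁻¹)) := by simp only [mul_assoc]
      _ = (A + E)⁻¹ * (E * A⁻¹) := by rw [Matrix.nonsing_inv_mul _ hAd, Matrix.one_mul]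
      _ = (A + E)⁻¹ * (((A + E) - A) * A⁻¹) := by rw [add_sub_cancel_left]
      _ = A⁻¹ - (A + E)⁻¹ := by
          rw [Matrix.sub_mul, mul_sub, Matrix.mul_nonsing_inv _ hAd, Matrix.mul_one,
            ← mul_assoc, Matrix.nonsing_inv_mul _ hAEd, Matrix.one_mul]
  rw [← h3]
  exact posDef_conj (hE.inv.add hA.inv).inv hA.inv.isUnit

/-- Strict antitonicity of matrix inversion. -/
lemma inv_anti {A B : Matrix (Fin p) (Fin p) ℝ}
    (hA : A.PosDef) (hBA : (B - A).PosDef) : (A⁻¹ - B⁻¹).PosDef := by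
  have := inv_sub_inv_posDef hA hBA
  rwa [add_sub_cancel] at this

lemma step_posDef {γ γh C : Matrix (Fin p) (Fin p) ℝ} {s : ℝ} (hs : 0 < s)
    (hγ : γ.PosDef) (hγh : γh.PosDef) (hC : C.PosSemidef) :
    (s • γh + (γ + C)⁻¹)⁻¹.PosDef :=
  ((posDef_smul hγh hs).add (hγ.add_posSemidef hC).inv).inv

lemma step_mono {γ γh C C' : Matrix (Fin p) (Fin p) ℝ} {s : ℝ} (hs : 0 < s)
    (hγ : γ.PosDef) (hγh : γh.PosDef) (hC : C.PosSemidef) (hd : (C' - C).PosDef) :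
    ((s • γh + (γ + C')⁻¹)⁻¹ - (s • γh + (γ + C)⁻¹)⁻¹).PosDef := by
  have hγC : (γ + C).PosDef := hγ.add_posSemidef hC
  have hC' : C'.PosSemidef := by
    have h := hC.add hd.posSemidef
    have e : C + (C' - C) = C' := by abel
    rwa [e] at h
  have hγC' : (γ + C').PosDef := hγ.add_posSemidef hC'
  have hinv1 : ((γ + C)⁻¹ - (γ + C')⁻¹).PosDef := by
    have h := inv_anti hγC (by
      have e : (γ + C') - (γ + C) = C' - C := by abel
      rw [e]; exact hd)
    exact h
  have houter : ((s • γh + (γ + C)⁻¹) - (s • γh + (γ + C')⁻¹)).PosDef := by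
    have e : (s • γh + (γ + C)⁻¹) - (s • γh + (γ + C')⁻¹) = (γ + C)⁻¹ - (γ + C')⁻¹ := by abel
    rw [e]; exact hinv1
  exact inv_anti ((posDef_smul hγh hs).add hγC'.inv) houter


lemma chain_mono {p : ℕ} {s : ℝ} (hs : 0 < s)
    (γ γhat : ℕ → Matrix (Fin p) (Fin p) ℝ)
    (m₁ o₁ m₂ o₂ : ℕ) (D₁ D₂ : Matrix (Fin p) (Fin p) ℝ) (N : ℕ)
    (hidx : ∀ k < N, m₁ - (o₁ + k) = m₂ - (o₂ + k))
    (hγ : ∀ k < N, (γ (m₂ - (o₂ + k))).PosDef)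
    (hγhat : ∀ k < N, (γhat (m₂ - (o₂ + k))).PosDef)
    (h0 : (sfracTail m₂ s γ γhat D₂ o₂).PosSemidef)
    (hd0 : (sfracTail m₁ s γ γhat D₁ o₁ - sfracTail m₂ s γ γhat D₂ o₂).PosDef) :
    (sfracTail m₂ s γ γhat D₂ (o₂ + N)).PosSemidef ∧
      (sfracTail m₁ s γ γhat D₁ (o₁ + N) - sfracTail m₂ s γ γhat D₂ (o₂ + N)).PosDef := by
  induction N with
  | zero => exact ⟨h0, hd0⟩
  | succ N ih =>
    obtain ⟨hps, hdf⟩ := ih (fun k hk => hidx k (Nat.lt_succ_of_lt hk))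
      (fun k hk => hγ k (Nat.lt_succ_of_lt hk)) (fun k hk => hγhat k (Nat.lt_succ_of_lt hk))
    have e1 : o₁ + (N + 1) = (o₁ + N) + 1 := rfl
    have e2 : o₂ + (N + 1) = (o₂ + N) + 1 := rfl
    rw [e1, e2, sfracTail, sfracTail]
    have hN : N < N + 1 := Nat.lt_succ_self N
    rw [hidx N hN]
    constructor
    · exact (step_posDef hs (hγ N hN) (hγhat N hN) hps).posSemidef
    · exact step_mono hs (hγ N hN) (hγhat N hN) hps hdf


/-- **Strict interlacing of Gauss and Gauss–Radau values in the continued-fraction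
depth (continued-fraction form of the bound (3.5)).** With
`G_k = C_1` computed at depth `k` with zero termination and `R_k` the Gauss–Radau
value at depth `k` (modified last step `C̃_k = (s·γ̂_k)⁻¹`), the Gauss values
increase strictly and the Gauss–Radau values decrease strictly in the Löwner
order: `G_{m+1} − G_m` and `R_m − R_{m+1}` are positive definite. -/
theorem gauss_radau_interlacing
    (p m : ℕ) (hp : 1 ≤ p) (hm : 1 ≤ m) (s : ℝ) (hs : 0 < s)
    (γ γhat : ℕ → Matrix (Fin p) (Fin p) ℝ)
    (hγ : ∀ i, 1 ≤ i → i ≤ m + 1 → (γ i).PosDef)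
    (hγhat : ∀ i, 1 ≤ i → i ≤ m + 1 → (γhat i).PosDef) :
    (sfracC (m + 1) s γ γhat 0 1 - sfracC m s γ γhat 0 1).PosDef ∧
      (sfracC (m - 1) s γ γhat ((s • γhat m)⁻¹) 1 -
        sfracC m s γ γhat ((s • γhat (m + 1))⁻¹) 1).PosDef := by
  constructor
  · -- Gauss part
    have key := chain_mono hs γ γhat (m + 1) 1 m 0 0 0 m
      (fun k hk => by omega)
      (fun k hk => hγ _ (by omega) (by omega))
      (fun k hk => hγhat _ (by omega) (by omega))
      (by simp [sfracTail]; exact Matrix.PosSemidef.zero)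
      (by
        simp only [sfracTail, Nat.sub_zero, add_zero, sub_zero]
        exact ((posDef_smul (hγhat (m + 1) (by omega) (by omega)) hs).add
          (hγ (m + 1) (by omega) (by omega)).inv).inv)
    have e₁ : m + 1 + 1 - 1 = 1 + m := by omega
    have e₂ : m + 1 - 1 = 0 + m := by omega
    simp only [sfracC, e₁, e₂]
    exact key.2
  · -- Gauss–Radau part
    set D₁ : Matrix (Fin p) (Fin p) ℝ := (s • γhat m)⁻¹ with hD₁
    set D₂ : Matrix (Fin p) (Fin p) ℝ := (s • γhat (m + 1))⁻¹ with hD₂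
    have hsγm : (s • γhat m).PosDef := posDef_smul (hγhat m (by omega) (by omega)) hs
    have hD₂pd : D₂.PosDef := (posDef_smul (hγhat (m + 1) (by omega) (by omega)) hs).inv
    have hX : ((γ m + D₂)⁻¹).PosDef :=
      ((hγ m (by omega) (by omega)).add_posSemidef hD₂pd.posSemidef).inv
    have h1 : sfracTail m s γ γhat D₂ 1 = (s • γhat m + (γ m + D₂)⁻¹)⁻¹ := by
      simp only [sfracTail, Nat.sub_zero]
    have key := chain_mono hs γ γhat (m - 1) 0 m 1 D₁ D₂ (m - 1)
      (fun k hk => by omega)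
      (fun k hk => hγ _ (by omega) (by omega))
      (fun k hk => hγhat _ (by omega) (by omega))
      (by rw [h1]; exact (step_posDef hs (hγ m (by omega) (by omega))
          (hγhat m (by omega) (by omega)) hD₂pd.posSemidef).posSemidef)
      (by
        have h0 : sfracTail (m - 1) s γ γhat D₁ 0 = D₁ := rfl
        rw [h0, h1, hD₁]
        exact inv_sub_inv_posDef hsγm hX)
    have e₁ : m - 1 + 1 - 1 = 0 + (m - 1) := by omega
    have e₂ : m + 1 - 1 = 1 + (m - 1) := by omega
    simp only [sfracC, e₁, e₂]
    exact key.2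
end
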